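/- arXiv:2603.07033 — 2 statements merged into one kernel-verified Lean document; each statement's English description precedes it below -/
import Mathlib

section
/- Let K be an algebraically closed field of characteristic zero and let sl₂(K[[t]]) denote the Lie algebra of 2×2 matrices of trace zero over the formal power series ring K[[t]], with bracket [X,Y] = XY − YX. Then the bracket width of sl₂(K[[t]]) is equal to 1: every element Z of sl₂(K[[t]]) can be written as a single bracket Z = [X,Y] with X, Y ∈ sl₂(K[[t]]). -/
/-!
Over a valuation ring one of the entries `a, b, c` of `Z = !![a, b; c, -a]` divides the other
two, so `Z = g • Z'` where `Z'` has an entry equal to `1`. When `2` is invertible, a trace-zero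
matrix with a unit entry is an explicit single bracket `⁅X, Y⁆`, and then `Z = ⁅X, g • Y⁆`.
The power series ring `K[[t]]` is a discrete valuation ring in which `2` is a unit.
-/

open Matrix

theorem PreValuationRing.exists_common_factor_three {R : Type*} [CommMonoid R]
    [PreValuationRing R] (a b c : R) :
    ∃ g a' b' c', a = g * a' ∧ b = g * b' ∧ c = g * c' ∧ (a' = 1 ∨ b' = 1 ∨ c' = 1) := by
  rcases ValuationRing.dvd_total a b with ⟨b', hb⟩ | ⟨a', ha⟩
  · rcases ValuationRing.dvd_total a c with ⟨c', hc⟩ | ⟨a', ha⟩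
    · exact ⟨a, 1, b', c', (mul_one a).symm, hb, hc, .inl rfl⟩
    · exact ⟨c, a', a' * b', 1, ha, by rw [hb, ha, mul_assoc], (mul_one c).symm, .inr (.inr rfl)⟩
  · rcases ValuationRing.dvd_total b c with ⟨c', hc⟩ | ⟨b', hb⟩
    · exact ⟨b, a', 1, c', ha, (mul_one b).symm, hc, .inr (.inl rfl)⟩
    · exact ⟨c, b' * a', b', 1, by rw [ha, hb, mul_assoc], hb, (mul_one c).symm, .inr (.inr rfl)⟩

namespace LieAlgebra.SpecialLinear

variable {R : Type*} [CommRing R]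

def slTwoOf (a b c : R) : sl (Fin 2) R :=
  ⟨!![a, b; c, -a], by simp [sl, trace_fin_two]⟩

theorem eq_slTwoOf (Z : sl (Fin 2) R) : Z = slTwoOf (Z.val 0 0) (Z.val 0 1) (Z.val 1 0) := by
  obtain ⟨M, hM⟩ := Z
  have htr : M 0 0 + M 1 1 = 0 := by simpa [sl, trace_fin_two] using hM
  ext i j
  fin_cases i <;> fin_cases j <;> simp [slTwoOf, eq_neg_of_add_eq_zero_right htr]

theorem smul_slTwoOf (g a b c : R) : g • slTwoOf a b c = slTwoOf (g * a) (g * b) (g * c) := by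
  ext i j
  fin_cases i <;> fin_cases j <;> simp [slTwoOf]

theorem lie_slTwoOf (a b c a' b' c' : R) :
    ⁅slTwoOf a b c, slTwoOf a' b' c'⁆ =
      slTwoOf (b * c' - c * b') (2 * (a * b' - b * a')) (2 * (c * a' - a * c')) := by
  ext i j
  fin_cases i <;> fin_cases j <;> simp [slTwoOf, Ring.lie_def] <;> ring

theorem exists_slTwoOf_eq_lie (h2 : IsUnit (2 : R)) {a b c : R}
    (hunit : IsUnit a ∨ IsUnit b ∨ IsUnit c) :
    ∃ X Y : sl (Fin 2) R, slTwoOf a b c = ⁅X, Y⁆ := by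
  obtain ⟨h, hh⟩ := h2.exists_right_inv
  rcases hunit with ha | hb | hc
  · obtain ⟨v, hv⟩ := ha.exists_left_inv
    refine ⟨slTwoOf (-(c * h)) a 0, slTwoOf (-(b * h * v)) 0 1, ?_⟩
    rw [lie_slTwoOf]
    congr 1
    · ring
    · linear_combination -(b * v * a) * hh - b * hv
    · linear_combination -c * hh
  · obtain ⟨v, hv⟩ := hb.exists_left_inv
    refine ⟨slTwoOf 0 1 (-(c * v)), slTwoOf (-(b * h)) 0 a, ?_⟩
    rw [lie_slTwoOf]
    congr 1
    · ring
    · linear_combination -b * hh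
    · linear_combination -(c * v * b) * hh - c * hv
  · obtain ⟨v, hv⟩ := hc.exists_left_inv
    refine ⟨slTwoOf 0 (-(b * v)) 1, slTwoOf (c * h) (-a) 0, ?_⟩
    rw [lie_slTwoOf]
    congr 1
    · ring
    · linear_combination -(b * v * c) * hh - b * hv
    · linear_combination -c * hh

theorem exists_eq_smul_slTwoOf [PreValuationRing R] (Z : sl (Fin 2) R) :
    ∃ g a b c : R, Z = g • slTwoOf a b c ∧ (IsUnit a ∨ IsUnit b ∨ IsUnit c) := by
  obtain ⟨g, a, b, c, ha, hb, hc, hone⟩ :=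
    PreValuationRing.exists_common_factor_three (Z.val 0 0) (Z.val 0 1) (Z.val 1 0)
  refine ⟨g, a, b, c, ?_, by rcases hone with rfl | rfl | rfl <;> simp⟩
  rw [smul_slTwoOf, ← ha, ← hb, ← hc]
  exact eq_slTwoOf Z

theorem sl_two_exists_eq_lie [PreValuationRing R] (h2 : IsUnit (2 : R)) (Z : sl (Fin 2) R) :
    ∃ X Y : sl (Fin 2) R, Z = ⁅X, Y⁆ := by
  obtain ⟨g, a, b, c, rfl, hunit⟩ := exists_eq_smul_slTwoOf Z
  obtain ⟨X, Y, hXY⟩ := exists_slTwoOf_eq_lie h2 hunit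
  exact ⟨X, g • Y, by rw [hXY, lie_smul]⟩

end LieAlgebra.SpecialLinear

theorem PowerSeries.isUnit_two {R : Type*} [Ring R] (h2 : IsUnit (2 : R)) :
    IsUnit (2 : PowerSeries R) :=
  isUnit_iff_constantCoeff.2 (by rwa [map_ofNat])

theorem bracket_width_sl2_power_series_general
    (K : Type*) [Field K] [CharZero K] :
    ∀ Z : LieAlgebra.SpecialLinear.sl (Fin 2) (PowerSeries K),
      ∃ X Y : LieAlgebra.SpecialLinear.sl (Fin 2) (PowerSeries K), Z = ⁅X, Y⁆ :=
  LieAlgebra.SpecialLinear.sl_two_exists_eq_lie (PowerSeries.isUnit_two (.mk0 2 two_ne_zero))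

/-- (Kunyavskii et al.) Over an algebraically closed field `K` of characteristic zero,
the bracket width of `sl₂(K[[t]])` is `1`: every trace-zero `2×2` matrix over the formal
power series ring `K[[t]]` is a single bracket of two elements of `sl₂(K[[t]])`. -/
theorem bracket_width_sl2_power_series
    (K : Type*) [Field K] [IsAlgClosed K] [CharZero K] :
    ∀ Z : LieAlgebra.SpecialLinear.sl (Fin 2) (PowerSeries K),
      ∃ X Y : LieAlgebra.SpecialLinear.sl (Fin 2) (PowerSeries K), Z = ⁅X, Y⁆ :=
  bracket_width_sl2_power_series_general K
end

section
/- Let n > 2 and suppose f is a 2-central polynomial for M_n(ℂ), i.e., f² is a central polynomial of M_n(ℂ) but f itself is not a central polynomial and not a polynomial identity of M_n(ℂ). Then the width of f in M_n(ℂ) is at least 3: there exists an element of the ℂ-linear span of f(M_n(ℂ)) that cannot be written as a linear combination of two elements of f(M_n(ℂ)). -/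
/-!
The image of `f`, and hence its span `S`, is stable under every automorphism of `Mₙ(ℂ)`.
Conjugating by `1 ± E` with `E² = 0` shows that `S` is closed under `x ↦ E x E` and
`x ↦ E x - x E`; starting from a noncentral value of `f` this produces a matrix unit in `S`,
then (by permuting indices) all of them, and hence every trace-zero matrix.

Every value of `f` squares to a scalar. Take `D = diag(w)` with `∑ w = 0` and `wᵢ ≠ ±wⱼ` for
`i ≠ j`. If `D = x + y` with `x²`, `y²` scalar, then `D x + x D = D² + x² - y²` is diagonal; its
`(i, j)` entry is `(wᵢ + wⱼ) xᵢⱼ`, so `x` and `y` are diagonal with entries `±s` and `±t`. Then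
the entries of `D` take at most two values up to sign, which is impossible for `n ≥ 3`.
-/

open Matrix

namespace FreeAlgebra

variable {R X A B : Type*} [CommSemiring R] [Semiring A] [Algebra R A] [Semiring B] [Algebra R B]

theorem algHom_lift_apply (φ : A →ₐ[R] B) (a : X → A) (f : FreeAlgebra R X) :
    φ (lift R a f) = lift R (φ ∘ a) f := by
  induction f using FreeAlgebra.induction <;> simp_all

end FreeAlgebra

def Submodule.IsAutInvariant {K A : Type*} [CommSemiring K] [Semiring A] [Algebra K A]
    (S : Submodule K A) : Prop :=
  ∀ φ : A ≃ₐ[K] A, ∀ x ∈ S, φ x ∈ S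

theorem FreeAlgebra.isAutInvariant_span_range_lift {R X A : Type*} [CommSemiring R]
    [Semiring A] [Algebra R A] (f : FreeAlgebra R X) :
    (Submodule.span R (Set.range fun a : X → A => lift R a f)).IsAutInvariant := by
  intro φ x hx
  refine (Submodule.span_le.mpr ?_ :
    _ ≤ (Submodule.span R _).comap φ.toLinearEquiv.toLinearMap) hx
  rintro _ ⟨a, rfl⟩
  exact Submodule.subset_span ⟨φ ∘ a, (algHom_lift_apply φ.toAlgHom a f).symm⟩

namespace Matrix

variable {m K : Type*} [Fintype m] [DecidableEq m]

theorem single_mul_single_self_of_ne [Semiring K] {i j : m} (hij : i ≠ j) :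
    single i j (1 : K) * single i j 1 = 0 :=
  single_mul_single_of_ne 1 i j i hij.symm 1

theorem diagonal_eq_sum_single [AddCommMonoid K] (w : m → K) :
    diagonal w = ∑ p, single p p (w p) := by
  conv_lhs => rw [← Finset.univ_sum_single w]
  simp [← diagonal_single, ← diagonalAddMonoidHom_apply, map_sum]

theorem diagonal_mem_center_iff [CommSemiring K] {d : m → K} :
    diagonal d ∈ Set.center (Matrix m m K) ↔ ∀ i j, d i = d j := by
  rw [center_eq_range]
  constructor
  · rintro ⟨r, hr⟩ i j
    rw [← diagonal_injective hr]
    rfl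
  · intro h
    cases isEmpty_or_nonempty m
    · exact ⟨0, Subsingleton.elim _ _⟩
    · obtain ⟨k⟩ := ‹Nonempty m›
      exact ⟨d k, congrArg diagonal (funext fun i => h k i)⟩

theorem isDiag_of_mem_center [CommSemiring K] {z : Matrix m m K}
    (hz : z ∈ Set.center (Matrix m m K)) : z.IsDiag := by
  rw [center_eq_range] at hz
  obtain ⟨r, rfl⟩ := hz
  exact isDiag_diagonal _

end Matrix

namespace Submodule.IsAutInvariant

section Algebra

variable {K A : Type*} [Field K] [Ring A] [Algebra K A] {S : Submodule K A}

theorem units_mul_mul_inv_mem (hS : S.IsAutInvariant) (u : Aˣ) {x : A} (hx : x ∈ S) :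
    ↑u * x * ↑u⁻¹ ∈ S := by
  simpa [ConjAct.units_smul_def] using
    hS (MulSemiringAction.toAlgEquiv K A (ConjAct.toConjAct u)) x hx

theorem conj_one_add_mem (hS : S.IsAutInvariant) {N x : A} (hN : N * N = 0) (hx : x ∈ S) :
    (1 + N) * x * (1 - N) ∈ S ∧ (1 - N) * x * (1 + N) ∈ S := by
  have h₁ : (1 + N) * (1 - N) = 1 := by noncomm_ring; simp [hN]
  have h₂ : (1 - N) * (1 + N) = 1 := by noncomm_ring; simp [hN]
  exact ⟨hS.units_mul_mul_inv_mem ⟨1 + N, 1 - N, h₁, h₂⟩ hx,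
    hS.units_mul_mul_inv_mem ⟨1 - N, 1 + N, h₂, h₁⟩ hx⟩

variable [NeZero (2 : K)]

theorem mul_mul_mem_of_mul_self_eq_zero (hS : S.IsAutInvariant) {N x : A} (hN : N * N = 0)
    (hx : x ∈ S) : N * x * N ∈ S := by
  obtain ⟨h₁, h₂⟩ := hS.conj_one_add_mem hN hx
  rw [← S.smul_mem_iff (two_ne_zero (α := K)), two_smul]
  convert S.sub_mem (S.add_mem hx hx) (S.add_mem h₁ h₂) using 1
  noncomm_ring

theorem mul_sub_mul_mem_of_mul_self_eq_zero (hS : S.IsAutInvariant) {N x : A} (hN : N * N = 0)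
    (hx : x ∈ S) : N * x - x * N ∈ S := by
  obtain ⟨h₁, h₂⟩ := hS.conj_one_add_mem hN hx
  rw [← S.smul_mem_iff (two_ne_zero (α := K)), two_smul]
  convert S.sub_mem h₁ h₂ using 1
  noncomm_ring

end Algebra

section Matrix

variable {m K : Type*} [Fintype m] [DecidableEq m] [Field K] {S : Submodule K (Matrix m m K)}

theorem single_mem_of_single_mem (hS : S.IsAutInvariant) {i j p q : m} (hij : i ≠ j)
    (hpq : p ≠ q) (h : single i j (1 : K) ∈ S) : single p q (1 : K) ∈ S := by
  have hinj : ∀ {a b : m}, a ≠ b → Function.Injective ![a, b] := fun hab x y => by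
    fin_cases x <;> fin_cases y <;> simp [hab, hab.symm]
  obtain ⟨σ, hσ⟩ := Equiv.Perm.exists_extending_pair _ _ (hinj hij) (hinj hpq)
  have hσi : σ i = p := hσ 0
  have hσj : σ j = q := hσ 1
  simpa [reindex_apply, hσi, hσj] using hS (reindexAlgEquiv K K σ) _ h

variable [NeZero (2 : K)]

theorem exists_single_mem (hS : S.IsAutInvariant) {v : Matrix m m K} (hv : v ∈ S)
    (hvc : v ∉ Set.center (Matrix m m K)) : ∃ i j, i ≠ j ∧ single i j (1 : K) ∈ S := by
  by_cases hoff : ∃ p q, p ≠ q ∧ v p q ≠ 0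
  · obtain ⟨p, q, hpq, hvpq⟩ := hoff
    refine ⟨q, p, hpq.symm, (S.smul_mem_iff hvpq).mp ?_⟩
    convert hS.mul_mul_mem_of_mul_self_eq_zero (single_mul_single_self_of_ne hpq.symm) hv
      using 1
    simp [smul_single]
  · push Not at hoff
    have hdiag : v = diagonal v.diag := (show v.IsDiag from hoff).diagonal_diag.symm
    obtain ⟨k, l, hkl⟩ : ∃ k l, v k k ≠ v l l := by
      by_contra! h
      exact hvc (hdiag ▸ diagonal_mem_center_iff.mpr h)
    have hlk : l ≠ k := fun h => hkl (h ▸ rfl)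
    -- `E_lk (E_kl v - v E_kl) E_lk = (v_ll - v_kk) E_lk`
    refine ⟨l, k, hlk, (S.smul_mem_iff (sub_ne_zero.mpr hkl.symm)).mp ?_⟩
    convert hS.mul_mul_mem_of_mul_self_eq_zero (single_mul_single_self_of_ne hlk)
      (hS.mul_sub_mul_mem_of_mul_self_eq_zero (single_mul_single_self_of_ne hlk.symm) hv)
      using 1
    simp [mul_sub, sub_mul, ← mul_assoc, smul_single, sub_smul]

theorem diagonal_mem (hS : S.IsAutInvariant) {i j : m} (hij : i ≠ j)
    (h : single i j (1 : K) ∈ S) {w : m → K} (hw : ∑ p, w p = 0) : diagonal w ∈ S := by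
  have hdiff : ∀ p, single p p (1 : K) - single i i 1 ∈ S := by
    intro p
    obtain rfl | hpi := eq_or_ne p i
    · simp
    simpa using hS.mul_sub_mul_mem_of_mul_self_eq_zero (single_mul_single_self_of_ne hpi)
      (hS.single_mem_of_single_mem hij hpi.symm h)
  have hsum : diagonal w = ∑ p, w p • (single p p (1 : K) - single i i 1) := by
    simp_rw [smul_sub, Finset.sum_sub_distrib, ← Finset.sum_smul, hw, zero_smul, sub_zero,
      smul_single, smul_eq_mul, mul_one, diagonal_eq_sum_single]
  rw [hsum]
  exact S.sum_mem fun p _ => S.smul_mem _ (hdiff p)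

end Matrix

end Submodule.IsAutInvariant

section Decomposition

variable {K : Type*} [CommRing K] [NoZeroDivisors K]

theorem card_le_two_of_mul_self_eq {ι : Type*} [Fintype ι] {ξ η : ι → K}
    (hξ : ∀ i j, ξ i * ξ i = ξ j * ξ j) (hη : ∀ i j, η i * η i = η j * η j)
    (h : Pairwise fun i j => ξ i + η i ≠ ξ j + η j ∧ ξ i + η i + (ξ j + η j) ≠ 0) :
    Fintype.card ι ≤ 2 := by
  have pair : ∀ i j, i ≠ j → (ξ i = ξ j ∧ η i = -η j) ∨ (ξ i = -ξ j ∧ η i = η j) := by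
    intro i j hij
    rcases mul_self_eq_mul_self_iff.mp (hξ i j) with h₁ | h₁ <;>
      rcases mul_self_eq_mul_self_iff.mp (hη i j) with h₂ | h₂
    · exact absurd (by rw [h₁, h₂]) (h hij).1
    · exact Or.inl ⟨h₁, h₂⟩
    · exact Or.inr ⟨h₁, h₂⟩
    · exact absurd (by rw [h₁, h₂]; ring) (h hij).2
  by_contra! hcard
  obtain ⟨a, b, c, hab, hac, hbc⟩ := Fintype.two_lt_card_iff.mp hcard
  rcases pair a b hab with ⟨h₁, h₂⟩ | ⟨h₁, h₂⟩ <;> rcases pair a c hac with ⟨h₃, h₄⟩ | ⟨h₃, h₄⟩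
  · exact (h hbc).1 (by linear_combination h₃ - h₁ + h₂ - h₄)
  · exact (h hbc).2 (by linear_combination h₃ - h₁ + h₂ - h₄)
  · exact (h hbc).2 (by linear_combination h₁ - h₃ + h₄ - h₂)
  · exact (h hbc).1 (by linear_combination h₁ - h₃ + h₄ - h₂)

namespace Matrix

variable {m : Type*} [Fintype m] [DecidableEq m]

theorem isDiag_of_isDiag_diagonal_mul_add_mul_diagonal {w : m → K}
    (hw : Pairwise fun i j => w i + w j ≠ 0) {x : Matrix m m K}
    (h : (diagonal w * x + x * diagonal w).IsDiag) : x.IsDiag := by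
  intro i j hij
  have hij' : (w i + w j) * x i j = 0 := by
    linear_combination (by simpa [diagonal_mul, mul_diagonal] using h hij :
      w i * x i j + x i j * w j = 0)
  exact (mul_eq_zero.mp hij').resolve_left (hw hij)

theorem diagonal_ne_add_of_mul_self_mem_center {w : m → K}
    (hw : Pairwise fun i j => w i ≠ w j ∧ w i + w j ≠ 0) (hm : 2 < Fintype.card m)
    {x y : Matrix m m K} (hx : x * x ∈ Set.center (Matrix m m K))
    (hy : y * y ∈ Set.center (Matrix m m K)) : diagonal w ≠ x + y := by
  intro hxy
  have hy' : y = diagonal w - x := eq_sub_of_add_eq' hxy.symm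
  have hxd : x.IsDiag := by
    refine isDiag_of_isDiag_diagonal_mul_add_mul_diagonal (fun i j hij => (hw hij).2) ?_
    rw [show diagonal w * x + x * diagonal w = diagonal w * diagonal w + x * x - y * y by
      rw [hy']; noncomm_ring, diagonal_mul_diagonal]
    exact ((isDiag_diagonal _).add (isDiag_of_mem_center hx)).sub (isDiag_of_mem_center hy)
  set ξ := x.diag
  have hx' : x = diagonal ξ := hxd.diagonal_diag.symm
  have hy'' : y = diagonal (w - ξ) := by rw [hy', hx', diagonal_sub]; rfl
  rw [hx', diagonal_mul_diagonal, diagonal_mem_center_iff] at hx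
  rw [hy'', diagonal_mul_diagonal, diagonal_mem_center_iff] at hy
  refine (card_le_two_of_mul_self_eq hx hy ?_).not_gt hm
  simpa using hw

end Matrix

end Decomposition

theorem exists_sum_eq_zero_pairwise_ne_and_add_ne_zero {K : Type*} [AddCommGroupWithOne K]
    [CharZero K] {n : ℕ} (hn : 2 < n) :
    ∃ w : Fin n → K, ∑ i, w i = 0 ∧ Pairwise fun i j => w i ≠ w j ∧ w i + w j ≠ 0 := by
  obtain ⟨v, hv, hv'⟩ : ∃ v : Fin n → ℤ, ∑ i, v i = 0 ∧
      Pairwise fun i j => v i ≠ v j ∧ v i + v j ≠ 0 := by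
    -- `v = (-T, 1, 2, …, n - 1)` with `T = 1 + 2 + ⋯ + (n - 1) > n - 1`
    set T := ∑ i : Fin n, (i : ℕ) with hT_def
    have hT : n - 1 < T := by
      have h2 := Finset.sum_range_id_mul_two n
      rw [← Fin.sum_univ_eq_sum_range] at h2
      obtain ⟨k, rfl⟩ : ∃ k, n = k + 3 := ⟨n - 3, by omega⟩
      rw [show k + 3 - 1 = k + 2 by omega] at h2 ⊢
      nlinarith
    let i₀ : Fin n := ⟨0, by omega⟩
    refine ⟨fun i => (i : ℤ) - if i = i₀ then (T : ℤ) else 0, ?_, fun i j hij => ?_⟩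
    · simp [Finset.sum_sub_distrib, hT_def]
    · have := Fin.val_injective.ne hij
      have := i.isLt
      have := j.isLt
      dsimp only
      split_ifs with hi hj hj <;> simp only [Fin.ext_iff, i₀] at hi hj <;> omega
  refine ⟨fun i => (v i : K), ?_, fun i j hij => ?_⟩
  · dsimp only
    exact_mod_cast hv
  · dsimp only
    exact ⟨by exact_mod_cast (hv' hij).1, by exact_mod_cast (hv' hij).2⟩

theorem two_central_polynomial_width_ge_three_general
    (n : ℕ) (hn : 2 < n) (f : FreeAlgebra ℂ ℕ)
    (hsq_central : ∀ a : ℕ → Matrix (Fin n) (Fin n) ℂ,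
      (FreeAlgebra.lift ℂ a f) ^ 2 ∈ Set.center (Matrix (Fin n) (Fin n) ℂ))
    (hf_not_central : ¬ ∀ a : ℕ → Matrix (Fin n) (Fin n) ℂ,
      FreeAlgebra.lift ℂ a f ∈ Set.center (Matrix (Fin n) (Fin n) ℂ)) :
    ∃ z ∈ Submodule.span ℂ
        {x : Matrix (Fin n) (Fin n) ℂ | ∃ a : ℕ → Matrix (Fin n) (Fin n) ℂ,
          FreeAlgebra.lift ℂ a f = x},
      ¬ ∃ (c₁ c₂ : ℂ) (s t : Matrix (Fin n) (Fin n) ℂ),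
        (∃ a : ℕ → Matrix (Fin n) (Fin n) ℂ, FreeAlgebra.lift ℂ a f = s) ∧
        (∃ a : ℕ → Matrix (Fin n) (Fin n) ℂ, FreeAlgebra.lift ℂ a f = t) ∧
        z = c₁ • s + c₂ • t := by
  have hS := FreeAlgebra.isAutInvariant_span_range_lift (A := Matrix (Fin n) (Fin n) ℂ) f
  obtain ⟨a₀, ha₀⟩ := not_forall.mp hf_not_central
  obtain ⟨i, j, hij, hE⟩ := hS.exists_single_mem (Submodule.subset_span ⟨a₀, rfl⟩) ha₀
  obtain ⟨w, hw_sum, hw⟩ := exists_sum_eq_zero_pairwise_ne_and_add_ne_zero (K := ℂ) hn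
  refine ⟨diagonal w, hS.diagonal_mem hij hE hw_sum, ?_⟩
  rintro ⟨c₁, c₂, _, _, ⟨a, rfl⟩, ⟨b, rfl⟩, hw_eq⟩
  have hsq : ∀ (c : ℂ) (a : ℕ → Matrix (Fin n) (Fin n) ℂ),
      (c • FreeAlgebra.lift ℂ a f) * (c • FreeAlgebra.lift ℂ a f) ∈ Set.center _ := by
    intro c a
    rw [smul_mul_smul_comm, ← sq (FreeAlgebra.lift ℂ a f)]
    exact Set.smul_mem_center _ (hsq_central a)
  exact diagonal_ne_add_of_mul_self_mem_center hw (by simpa using hn) (hsq c₁ a) (hsq c₂ b) hw_eq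

/-- Theorem (Brešar–Šemrl): if `n > 2` and `f` is a 2-central polynomial for `Mₙ(ℂ)`
(i.e. `f²` is a central polynomial of `Mₙ(ℂ)` while `f` itself is neither a central
polynomial nor a polynomial identity), then the width of `f` in `Mₙ(ℂ)` is at least 3:
some element of the span of `f(Mₙ(ℂ))` is not a linear combination of two elements of
`f(Mₙ(ℂ))`. -/
theorem two_central_polynomial_width_ge_three
    (n : ℕ) (hn : 2 < n) (f : FreeAlgebra ℂ ℕ)
    (hsq_central : ∀ a : ℕ → Matrix (Fin n) (Fin n) ℂ,
      (FreeAlgebra.lift ℂ a f) ^ 2 ∈ Set.center (Matrix (Fin n) (Fin n) ℂ))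
    (hsq_not_id : ¬ ∀ a : ℕ → Matrix (Fin n) (Fin n) ℂ, (FreeAlgebra.lift ℂ a f) ^ 2 = 0)
    (hf_not_central : ¬ ∀ a : ℕ → Matrix (Fin n) (Fin n) ℂ,
      FreeAlgebra.lift ℂ a f ∈ Set.center (Matrix (Fin n) (Fin n) ℂ))
    (hf_not_id : ¬ ∀ a : ℕ → Matrix (Fin n) (Fin n) ℂ, FreeAlgebra.lift ℂ a f = 0) :
    ∃ z ∈ Submodule.span ℂ
        {x : Matrix (Fin n) (Fin n) ℂ | ∃ a : ℕ → Matrix (Fin n) (Fin n) ℂ,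
          FreeAlgebra.lift ℂ a f = x},
      ¬ ∃ (c₁ c₂ : ℂ) (s t : Matrix (Fin n) (Fin n) ℂ),
        (∃ a : ℕ → Matrix (Fin n) (Fin n) ℂ, FreeAlgebra.lift ℂ a f = s) ∧
        (∃ a : ℕ → Matrix (Fin n) (Fin n) ℂ, FreeAlgebra.lift ℂ a f = t) ∧
        z = c₁ • s + c₂ • t :=
  two_central_polynomial_width_ge_three_general n hn f hsq_central hf_not_central
end
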